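/- arXiv:2211.05002 — 4 statements merged into one kernel-verified Lean document; each statement's English description precedes it below -/
import Mathlib

section
/- The current operators satisfy [a_m, \psi_k] = \psi_{k-m} and [a_m, \psi_k^*] = -\psi_{k+m}^* for all integers m \neq 0 and k, as operators on fermionic Fock space. -/
/-- The normal-ordered quadratic `:ψ_i ψ_{i+k}^*:`. -/
noncomputable def nordOp {R F : Type*} [CommRing R] [AddCommGroup F] [Module R F]
    (ψ ψs : ℤ → Module.End R F) (i k : ℤ) : Module.End R F :=
  if i ≤ 0 then ψ i * ψs (i + k) else -(ψs (i + k) * ψ i)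

/-- The relations `[a_m, ψ_k] = ψ_{k-m}` and `[a_m, ψ_k^*] = -ψ_{k+m}^*` for the
current operators `a_m = ∑_{i ∈ ℤ} :ψ_i ψ_{i+m}^*:` acting on fermionic Fock
space. -/
theorem current_operator_fermion_commutators {R F : Type*} [CommRing R] [AddCommGroup F]
    [Module R F] (ψ ψs : ℤ → Module.End R F)
    (hcar1 : ∀ m n : ℤ, ψ m * ψ n + ψ n * ψ m = 0)
    (hcar2 : ∀ m n : ℤ, ψs m * ψs n + ψs n * ψs m = 0)
    (hcar3 : ∀ m n : ℤ, ψ m * ψs n + ψs n * ψ m = if m = n then 1 else 0)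
    (a : ℤ → Module.End R F)
    (hfin : ∀ (k : ℤ) (v : F), (Function.support fun i : ℤ => nordOp ψ ψs i k v).Finite)
    (ha : ∀ (k : ℤ) (v : F), a k v = ∑ᶠ i : ℤ, nordOp ψ ψs i k v) :
    ∀ m k : ℤ, m ≠ 0 →
      (a m * ψ k - ψ k * a m = ψ (k - m)) ∧
      (a m * ψs k - ψs k * a m = -ψs (k + m)) := by
  intro m k hm
  -- For m ≠ 0, the normal-ordered product equals the plain product.
  have hnord : ∀ i : ℤ, nordOp ψ ψs i m = ψ i * ψs (i + m) := by
    intro i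
    unfold nordOp
    split_ifs with h
    · rfl
    · have h3 := hcar3 i (i + m)
      rw [if_neg (by omega)] at h3
      exact neg_eq_of_add_eq_zero_left h3
  have hcomm1 : ∀ i : ℤ, (ψ i * ψs (i + m)) * ψ k - ψ k * (ψ i * ψs (i + m))
      = if i = k - m then ψ i else 0 := by
    intro i
    have h1 : ψs (i + m) * ψ k
        = (if k = i + m then (1 : Module.End R F) else 0) - ψ k * ψs (i + m) :=
      eq_sub_of_add_eq' (hcar3 k (i + m))
    have h2 : ψ i * ψ k = -(ψ k * ψ i) := eq_neg_of_add_eq_zero_left (hcar1 i k)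
    rw [mul_assoc, h1, mul_sub, ← mul_assoc (ψ i), h2]
    by_cases hik : i = k - m
    · rw [if_pos (by omega), if_pos hik]
      noncomm_ring
    · rw [if_neg (by omega), if_neg hik]
      noncomm_ring
  have hcomm2 : ∀ i : ℤ, (ψ i * ψs (i + m)) * ψs k - ψs k * (ψ i * ψs (i + m))
      = if i = k then -ψs (i + m) else 0 := by
    intro i
    have h1 : ψs (i + m) * ψs k = -(ψs k * ψs (i + m)) :=
      eq_neg_of_add_eq_zero_left (hcar2 (i + m) k)
    have h2 : ψ i * ψs k
        = (if i = k then (1 : Module.End R F) else 0) - ψs k * ψ i :=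
      eq_sub_of_add_eq (hcar3 i k)
    rw [mul_assoc, h1, mul_neg, ← mul_assoc, h2]
    by_cases hik : i = k
    · rw [if_pos hik, if_pos hik]
      noncomm_ring
    · rw [if_neg hik, if_neg hik]
      noncomm_ring
  constructor
  · ext v
    have hpsik : ψ k (∑ᶠ i : ℤ, nordOp ψ ψs i m v) = ∑ᶠ i : ℤ, ψ k (nordOp ψ ψs i m v) :=
      (ψ k).toAddMonoidHom.map_finsum (hfin m v)
    have hfin2 : (Function.support fun i : ℤ => ψ k (nordOp ψ ψs i m v)).Finite := by
      apply (hfin m v).subset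
      intro i hi
      simp only [Function.mem_support] at hi ⊢
      intro h0
      exact hi (by rw [h0, map_zero])
    calc (a m * ψ k - ψ k * a m) v
        = (∑ᶠ i : ℤ, nordOp ψ ψs i m (ψ k v)) - ∑ᶠ i : ℤ, ψ k (nordOp ψ ψs i m v) := by
          simp only [LinearMap.sub_apply, Module.End.mul_apply, ha, hpsik]
      _ = ∑ᶠ i : ℤ, (nordOp ψ ψs i m (ψ k v) - ψ k (nordOp ψ ψs i m v)) :=
          (finsum_sub_distrib (hfin m (ψ k v)) hfin2).symm
      _ = ∑ᶠ i : ℤ, (if i = k - m then ψ i v else 0) := by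
          apply finsum_congr
          intro i
          have := congrArg (fun T : Module.End R F => T v) (hcomm1 i)
          simp only [LinearMap.sub_apply, Module.End.mul_apply, hnord] at this ⊢
          rw [this]
          split_ifs <;> simp
      _ = ψ (k - m) v := by
          rw [finsum_eq_single _ (k - m) (fun x hx => by rw [if_neg hx]), if_pos rfl]
  · ext v
    have hpsik : ψs k (∑ᶠ i : ℤ, nordOp ψ ψs i m v) = ∑ᶠ i : ℤ, ψs k (nordOp ψ ψs i m v) :=
      (ψs k).toAddMonoidHom.map_finsum (hfin m v)
    have hfin2 : (Function.support fun i : ℤ => ψs k (nordOp ψ ψs i m v)).Finite := by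
      apply (hfin m v).subset
      intro i hi
      simp only [Function.mem_support] at hi ⊢
      intro h0
      exact hi (by rw [h0, map_zero])
    calc (a m * ψs k - ψs k * a m) v
        = (∑ᶠ i : ℤ, nordOp ψ ψs i m (ψs k v)) - ∑ᶠ i : ℤ, ψs k (nordOp ψ ψs i m v) := by
          simp only [LinearMap.sub_apply, Module.End.mul_apply, ha, hpsik]
      _ = ∑ᶠ i : ℤ, (nordOp ψ ψs i m (ψs k v) - ψs k (nordOp ψ ψs i m v)) :=
          (finsum_sub_distrib (hfin m (ψs k v)) hfin2).symm
      _ = ∑ᶠ i : ℤ, (if i = k then -ψs (i + m) v else 0) := by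
          apply finsum_congr
          intro i
          have := congrArg (fun T : Module.End R F => T v) (hcomm2 i)
          simp only [LinearMap.sub_apply, LinearMap.neg_apply, Module.End.mul_apply,
            hnord] at this ⊢
          rw [this]
          split_ifs <;> simp
      _ = (-ψs (k + m)) v := by
          rw [finsum_eq_single _ k (fun x hx => by rw [if_neg hx]), if_pos rfl]
          simp
end

section
/- Wick's theorem: for any integers m_1, ..., m_r and n_1, ..., n_r, the vacuum expectation value satisfies \langle \psi_{m_r} \cdots \psi_{m_1} \psi_{n_1}^* \cdots \psi_{n_r}^* \rangle = det[\langle \psi_{m_i} \psi_{n_j}^* \rangle]_{i,j=1}^r. -/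
section WickAux

variable {R F : Type*} [CommRing R] [AddCommGroup F] [Module R F]

private lemma fin_succAbove_comp (k : ℕ) (i : Fin (k + 1)) (j : Fin k) :
    (i.castSucc).succAbove (j.castSucc) = (i.succAbove j).castSucc := by
  rcases lt_or_ge (j.castSucc) i with h | h
  · rw [Fin.succAbove_castSucc_of_lt _ _ h, Fin.succAbove_of_castSucc_lt _ _ h]
  · rw [Fin.succAbove_castSucc_of_le _ _ h, Fin.succAbove_of_le_castSucc _ _ h,
      Fin.succ_castSucc]

private lemma fin_succAbove_comp_last (k : ℕ) (i : Fin (k + 1)) :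
    (i.castSucc).succAbove (Fin.last k) = Fin.last (k + 1) :=
  Fin.succAbove_ne_last_last (Fin.ne_of_lt (Fin.castSucc_lt_last i))

/-- Moving `ψs a` leftward through a product of `ψs`'s. -/
private lemma psiS_move (ψs : ℤ → Module.End R F)
    (hcar2 : ∀ m n : ℤ, ψs m * ψs n + ψs n * ψs m = 0)
    (k : ℕ) (g : Fin k → ℤ) (a : ℤ) :
    (List.ofFn fun j : Fin k => ψs (g j)).prod * ψs a
      = ((-1 : R) ^ k) • (ψs a * (List.ofFn fun j : Fin k => ψs (g j)).prod) := by
  induction k with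
  | zero => simp
  | succ k ih =>
    have h0 : ∀ b c : ℤ, ψs b * ψs c = -(ψs c * ψs b) := fun b c =>
      eq_neg_of_add_eq_zero_left (hcar2 b c)
    rw [List.ofFn_succ]
    simp only [List.prod_cons]
    rw [mul_assoc, ih (fun j => g j.succ), mul_smul_comm, ← mul_assoc, h0 (g 0) a,
      neg_mul, mul_assoc, smul_neg, ← neg_smul]
    ring_nf

/-- Moving `ψs a` leftward through a product of `ψ`'s, picking up contraction terms. -/
private lemma psi_move (ψ ψs : ℤ → Module.End R F)
    (hcar3 : ∀ m n : ℤ, ψ m * ψs n + ψs n * ψ m = if m = n then 1 else 0)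
    (k : ℕ) (f : Fin (k + 1) → ℤ) (a : ℤ) :
    (List.ofFn fun i : Fin (k + 1) => ψ (f i)).reverse.prod * ψs a
      = ((-1 : R) ^ (k + 1)) • (ψs a * (List.ofFn fun i : Fin (k + 1) => ψ (f i)).reverse.prod)
        + ∑ i : Fin (k + 1), (((-1 : R) ^ (i : ℕ)) * (if f i = a then 1 else 0)) •
            (List.ofFn fun j : Fin k => ψ (f (i.succAbove j))).reverse.prod := by
  have h3 : ∀ b : ℤ, ψ b * ψs a = (if b = a then (1 : Module.End R F) else 0) - ψs a * ψ b :=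
    fun b => eq_sub_of_add_eq (hcar3 b a)
  induction k with
  | zero =>
    rw [Fin.sum_univ_one]
    simp only [List.ofFn_succ, List.ofFn_zero, List.reverse_cons, List.reverse_nil,
      List.nil_append, List.prod_cons, List.prod_nil, mul_one, pow_one, neg_smul, one_smul,
      Fin.val_zero, pow_zero, one_mul]
    rw [h3 (f 0)]
    split <;> simp [sub_eq_add_neg, add_comm]
  | succ k ih =>
    have hP : ∀ (l : ℕ) (g : Fin (l + 1) → ℤ),
        (List.ofFn fun i : Fin (l + 1) => ψ (g i)).reverse.prod
          = ψ (g (Fin.last l)) * (List.ofFn fun i : Fin l => ψ (g i.castSucc)).reverse.prod := by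
      intro l g
      rw [List.ofFn_succ' (fun i : Fin (l + 1) => ψ (g i)), List.concat_eq_append,
        List.reverse_append, List.reverse_singleton, List.singleton_append, List.prod_cons]
    have hterm : ∀ i : Fin (k + 1),
        (List.ofFn fun j : Fin (k + 1) =>
            ψ (f ((i.castSucc).succAbove j))).reverse.prod
          = ψ (f (Fin.last (k + 1))) *
              (List.ofFn fun j : Fin k => ψ (f (i.succAbove j).castSucc)).reverse.prod := by
      intro i
      rw [hP k (fun j => f ((i.castSucc).succAbove j)), fin_succAbove_comp_last]
      have hfun : ∀ j : Fin k, f ((i.castSucc).succAbove j.castSucc)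
          = f ((i.succAbove j).castSucc) := fun j => by rw [fin_succAbove_comp]
      simp only [hfun]
    rw [hP (k + 1) f]
    rw [Fin.sum_univ_castSucc (f := fun i : Fin (k + 2) =>
      (((-1 : R) ^ (i : ℕ)) * (if f i = a then 1 else 0)) •
        (List.ofFn fun j : Fin (k + 1) => ψ (f (i.succAbove j))).reverse.prod)]
    simp only [Fin.succAbove_last, Fin.coe_castSucc, Fin.val_last, hterm]
    rw [mul_assoc, ih (fun i : Fin (k + 1) => f i.castSucc), mul_add, mul_smul_comm,
      ← mul_assoc, h3 (f (Fin.last (k + 1))), sub_mul, Finset.mul_sum]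
    simp only [mul_smul_comm]
    rw [smul_sub]
    have hE : (if f (Fin.last (k + 1)) = a then (1 : Module.End R F) else 0) *
        (List.ofFn fun i : Fin (k + 1) => ψ (f i.castSucc)).reverse.prod
        = (if f (Fin.last (k + 1)) = a then (1 : R) else 0) •
            (List.ofFn fun i : Fin (k + 1) => ψ (f i.castSucc)).reverse.prod := by
      split <;> simp
    rw [hE, smul_smul, show ((-1 : R) ^ (k + 1 + 1)) = -((-1 : R) ^ (k + 1)) by ring, neg_smul]
    simp only [mul_assoc]
    abel

end WickAux

/-- Wick's theorem: the vacuum expectation value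
`⟨ψ_{m_r} ⋯ ψ_{m_1} ψ_{n_1}^* ⋯ ψ_{n_r}^*⟩` equals the determinant
`det[⟨ψ_{m_i} ψ_{n_j}^*⟩]_{i,j=1}^r`.  Here `F` is fermionic Fock space with
vacuum `vac = |0⟩` and dual vacuum `covac = ⟨0|`, satisfying the canonical
anticommutation relations and the vacuum annihilation conditions. -/
theorem wick_theorem {R F : Type*} [CommRing R] [AddCommGroup F] [Module R F]
    (ψ ψs : ℤ → Module.End R F)
    (hcar1 : ∀ m n : ℤ, ψ m * ψ n + ψ n * ψ m = 0)
    (hcar2 : ∀ m n : ℤ, ψs m * ψs n + ψs n * ψs m = 0)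
    (hcar3 : ∀ m n : ℤ, ψ m * ψs n + ψs n * ψ m = if m = n then 1 else 0)
    (vac : F) (covac : F →ₗ[R] R)
    (hnorm : covac vac = 1)
    (hvac_psi : ∀ n : ℤ, n < 0 → ψ n vac = 0)
    (hvac_psiS : ∀ n : ℤ, 0 ≤ n → ψs n vac = 0)
    (hcovac_psi : ∀ (n : ℤ) (v : F), 0 ≤ n → covac (ψ n v) = 0)
    (hcovac_psiS : ∀ (n : ℤ) (v : F), n < 0 → covac (ψs n v) = 0)
    (r : ℕ) (m n : Fin r → ℤ) :
    covac ((((List.ofFn fun i : Fin r => ψ (m i)).reverse.prod) *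
        ((List.ofFn fun j : Fin r => ψs (n j)).prod)) vac)
      = Matrix.det (Matrix.of fun i j : Fin r => covac ((ψ (m i) * ψs (n j)) vac)) := by
  induction r with
  | zero => simp [hnorm]
  | succ r ih =>
    have hQ : (List.ofFn fun j : Fin (r + 1) => ψs (n j)).prod
        = (List.ofFn fun j : Fin r => ψs (n j.castSucc)).prod * ψs (n (Fin.last r)) := by
      rw [List.ofFn_succ' (fun j : Fin (r + 1) => ψs (n j)), List.concat_eq_append,
        List.prod_append, List.prod_singleton]
    set a := n (Fin.last r) with ha_def
    rcases lt_or_ge a 0 with ha | ha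
    · -- a < 0
      have hM : ∀ b : ℤ, covac ((ψ b * ψs a) vac) = if b = a then 1 else 0 := by
        intro b
        rw [eq_sub_of_add_eq (hcar3 b a), LinearMap.sub_apply, map_sub,
          Module.End.mul_apply, hcovac_psiS a _ ha, sub_zero]
        split <;> simp [hnorm]
      rw [Matrix.det_succ_column
        (Matrix.of fun i j : Fin (r + 1) => covac ((ψ (m i) * ψs (n j)) vac)) (Fin.last r)]
      simp only [Matrix.submatrix_apply, Matrix.of_apply, Fin.succAbove_last, Fin.val_last]
      rw [hQ, psiS_move (R := R) ψs hcar2 r _ a, mul_smul_comm, ← mul_assoc,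
        psi_move (R := R) ψ ψs hcar3 r m a, add_mul, smul_mul_assoc, Finset.sum_mul]
      simp only [smul_mul_assoc]
      rw [mul_assoc (ψs a)]
      simp only [LinearMap.smul_apply, LinearMap.add_apply, map_add, map_smul, smul_eq_mul,
        Module.End.mul_apply, hcovac_psiS a _ ha, mul_zero]
      rw [LinearMap.sum_apply, map_sum, zero_add, Finset.mul_sum]
      refine Finset.sum_congr rfl fun i _ => ?_
      have hIH := ih (fun i' => m (i.succAbove i')) (fun j' => n j'.castSucc)
      have hM2 := hM (m i)
      simp only [Module.End.mul_apply] at hIH hM2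
      have hmat : (Matrix.of fun i j : Fin (r + 1) =>
            covac ((ψ (m i)) ((ψs (n j)) vac))).submatrix i.succAbove Fin.castSucc
          = Matrix.of fun i' j' : Fin r =>
              covac ((ψ (m (i.succAbove i'))) ((ψs (n j'.castSucc)) vac)) := rfl
      simp only [LinearMap.smul_apply, map_smul, smul_eq_mul, Module.End.mul_apply]
      rw [hmat, ← hIH, show n (Fin.last r) = a from ha_def.symm, hM2, pow_add]
      ring
    · -- 0 ≤ a : both sides vanish
      rw [hQ]
      have h0 : ((List.ofFn fun j : Fin r => ψs (n j.castSucc)).prod * ψs a) vac = 0 := by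
        rw [Module.End.mul_apply, hvac_psiS a ha, map_zero]
      rw [Module.End.mul_apply, h0, map_zero, map_zero]
      symm
      apply Matrix.det_eq_zero_of_column_eq_zero (Fin.last r)
      intro i
      rw [Matrix.of_apply, Module.End.mul_apply, hvac_psiS a ha, map_zero, map_zero]
end

section
/- Duality of the deformed bases: for all partitions \lambda, \mu, one has {}_{[\alpha,\beta]}\langle \mu | \lambda \rangle_{[\alpha,\beta]} = \delta_{\lambda\mu}; equivalently, the determinant det[h_{\lambda_i - \mu_j - i + j}((A_{\mu_j} \sqcup B_{i-1})/(A_{\lambda_i - 1} \sqcup B_{j-1}))]_{i,j=1}^{\ell} equals \delta_{\lambda\mu} for any \ell \geq \ell(\lambda), \ell(\mu). -/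
/-!
The generating series of `h_d(X/Y)` is `∏_{y ∈ Y} (1 - y t) / ∏_{x ∈ X} (1 - x t)`, so when `X ⊆ Y`
it is the polynomial `∏_{y ∈ Y \ X} (1 - y t)` and `h_d(X/Y) = (-1)^d e_d(Y \ X)` vanishes for
`d > |Y \ X|`.

If `λ = μ` the matrix is upper unitriangular. Otherwise pick `r` with `λ_r ≠ μ_r`. If `λ_r < μ_r`,
every entry in rows `≥ r` and columns `≤ r` has negative index. If `λ_r > μ_r`, every entry in rows
`≤ r` and columns `≥ r` has `A_{μ_j} ⊔ B_{i-1} ⊆ A_{λ_i-1} ⊔ B_{j-1}` with index larger than the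
size of the difference. Either zero block is too large for a permutation to avoid, so the
determinant vanishes.
-/

open scoped Classical

/-- The elementary symmetric function `e_k` of a list of variables. -/
noncomputable def eList {R : Type*} [CommRing R] (x : List R) (k : ℕ) : R :=
  ((x.sublistsLen k).map List.prod).sum

/-- The complete homogeneous symmetric function `h_k` of a list of variables. -/
noncomputable def hList {R : Type*} [CommRing R] (x : List R) (k : ℕ) : R :=
  ∑ m ∈ (Finset.univ : Finset (Fin x.length)).sym k, (m.1.map x.get).prod

/-- The supersymmetric complete homogeneous function
`h_m(x/y) = ∑_{k=0}^m (-1)^{m-k} h_k(x) e_{m-k}(y)` of two lists of variables. -/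
noncomputable def hSuperList {R : Type*} [CommRing R] (x y : List R) (m : ℕ) : R :=
  ∑ k ∈ Finset.range (m + 1), (-1 : R) ^ (m - k) * hList x k * eList y (m - k)

/-- `h_m(x/y)` for an integer index `m`, vanishing for `m < 0`. -/
noncomputable def hSuperListZ {R : Type*} [CommRing R] (x y : List R) (m : ℤ) : R :=
  if 0 ≤ m then hSuperList x y m.toNat else 0

/-- The alphabet `A_i = {-α_1, …, -α_i}`. -/
noncomputable def AAlph {R : Type*} [CommRing R] (α : ℕ → R) (i : ℕ) : List R :=
  (List.range i).map fun t => -α (t + 1)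

/-- The alphabet `B_i = {β_1, …, β_i}`. -/
noncomputable def BAlph {R : Type*} [CommRing R] (β : ℕ → R) (i : ℕ) : List R :=
  (List.range i).map fun t => β (t + 1)

namespace MvPolynomial

theorem hsymm_option_succ (σ R : Type*) [CommSemiring R] [Fintype σ] [DecidableEq σ] (k : ℕ) :
    hsymm (Option σ) R (k + 1) =
      X none * hsymm (Option σ) R k + rename some (hsymm σ R (k + 1)) := by
  rw [hsymm, ← symOptionSuccEquiv.symm.sum_comp, Fintype.sum_sum_type]
  simp [hsymm, symOptionSuccEquiv, Finset.mul_sum, map_sum, Multiset.map_map, map_multiset_prod,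
    Sym.coe_cons]

end MvPolynomial

section SymmetricFunctions

variable {R : Type*} [CommRing R]

open MvPolynomial in
theorem hList_eq_aeval_hsymm (x : List R) (k : ℕ) :
    hList x k = aeval x.get (hsymm (Fin x.length) R k) := by
  simp [hList, hsymm, map_sum, map_multiset_prod, Multiset.map_map]

open MvPolynomial in
theorem hList_cons_succ (a : R) (x : List R) (k : ℕ) :
    hList (a :: x) (k + 1) = a * hList (a :: x) k + hList x (k + 1) := by
  have hget : (a :: x).get ∘ (finSuccEquiv x.length).symm = fun i => Option.elim i a x.get := by
    ext (_ | i) <;> rfl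
  simp only [hList_eq_aeval_hsymm, List.length_cons,
    ← rename_hsymm _ _ _ (finSuccEquiv x.length).symm, aeval_rename, hget, hsymm_option_succ,
    map_add, map_mul, aeval_X]
  rfl

theorem hList_zero (x : List R) : hList x 0 = 1 := by
  simp [hList_eq_aeval_hsymm, MvPolynomial.hsymm_zero]

theorem hList_nil_succ (k : ℕ) : hList ([] : List R) (k + 1) = 0 := by
  simp [hList]

theorem eList_zero (x : List R) : eList x 0 = 1 := by
  simp [eList]

theorem eList_nil_succ (k : ℕ) : eList ([] : List R) (k + 1) = 0 := by
  simp [eList]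

theorem eList_cons_succ (a : R) (x : List R) (k : ℕ) :
    eList (a :: x) (k + 1) = eList x (k + 1) + a * eList x k := by
  simp [eList, List.sublistsLen_succ_cons, List.sum_map_mul_left, Function.comp_def]

theorem eList_of_length_lt (x : List R) {k : ℕ} (h : x.length < k) : eList x k = 0 := by
  simp [eList, List.sublistsLen_of_length_lt h]

end SymmetricFunctions

section GeneratingSeries

open PowerSeries

variable {R : Type*} [CommRing R]

noncomputable def eSeries (x : List R) : R⟦X⟧ :=
  (x.map fun a => 1 - C a * X).prod

noncomputable def hSeries (x : List R) : R⟦X⟧ :=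
  mk (hList x)

theorem eSeries_append (x y : List R) : eSeries (x ++ y) = eSeries x * eSeries y := by
  simp [eSeries]

theorem List.Perm.eSeries_eq {x y : List R} (h : x.Perm y) : eSeries x = eSeries y :=
  (h.map _).prod_eq

theorem coeff_one_sub_C_mul_X_mul (a : R) (f : R⟦X⟧) (k : ℕ) :
    coeff (k + 1) ((1 - C a * X) * f) = coeff (k + 1) f - a * coeff k f := by
  simp [sub_mul, mul_assoc, coeff_succ_X_mul]

theorem coeff_eSeries (x : List R) (k : ℕ) : coeff k (eSeries x) = (-1) ^ k * eList x k := by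
  induction x generalizing k with
  | nil => cases k <;> simp [eSeries, coeff_one, eList_zero, eList_nil_succ]
  | cons a x ih =>
    rw [eSeries, List.map_cons, List.prod_cons, ← eSeries]
    cases k with
    | zero => simpa [eList_zero] using ih 0
    | succ k =>
      rw [coeff_one_sub_C_mul_X_mul, ih, ih, eList_cons_succ]
      ring

theorem eSeries_mul_hSeries (x : List R) : eSeries x * hSeries x = 1 := by
  induction x with
  | nil =>
    ext (_ | k) <;> simp [eSeries, hSeries, coeff_one, hList_zero, hList_nil_succ]
  | cons a x ih =>
    have hcons : (1 - C a * X) * hSeries (a :: x) = hSeries x := by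
      ext (_ | k)
      · simp [hSeries, hList_zero]
      · simp only [coeff_one_sub_C_mul_X_mul, hSeries, coeff_mk, hList_cons_succ]
        ring
    rw [eSeries, List.map_cons, List.prod_cons, ← eSeries, mul_comm (1 - C a * X), mul_assoc,
      hcons, ih]

theorem hSuperList_eq_coeff (x y : List R) (m : ℕ) :
    hSuperList x y m = coeff m (hSeries x * eSeries y) := by
  rw [coeff_mul, Finset.Nat.sum_antidiagonal_eq_sum_range_succ_mk, hSuperList]
  refine Finset.sum_congr rfl fun k _ => ?_
  rw [hSeries, coeff_mk, coeff_eSeries]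
  ring

theorem hSuperList_of_perm_append {x y z : List R} (h : y.Perm (x ++ z)) (m : ℕ) :
    hSuperList x y m = (-1) ^ m * eList z m := by
  rw [hSuperList_eq_coeff, h.eSeries_eq, eSeries_append, ← mul_assoc, mul_comm (hSeries x),
    eSeries_mul_hSeries, one_mul, coeff_eSeries]

end GeneratingSeries

section SuperHomogeneous

variable {R : Type*} [CommRing R]

theorem hSuperListZ_of_neg (x y : List R) {d : ℤ} (hd : d < 0) : hSuperListZ x y d = 0 :=
  if_neg hd.not_ge

theorem hSuperListZ_zero (x y : List R) : hSuperListZ x y 0 = 1 := by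
  simp [hSuperListZ, hSuperList, hList_zero, eList_zero]

theorem hSuperListZ_append_eq_zero_of_isPrefix {x₁ x₂ y₁ y₂ : List R} (h₁ : x₁ <+: y₁)
    (h₂ : x₂ <+: y₂) {d : ℤ}
    (hd : ((y₁.length - x₁.length + (y₂.length - x₂.length) : ℕ) : ℤ) < d) :
    hSuperListZ (x₁ ++ x₂) (y₁ ++ y₂) d = 0 := by
  obtain ⟨z₁, rfl⟩ := h₁
  obtain ⟨z₂, rfl⟩ := h₂
  have hperm : (x₁ ++ z₁ ++ (x₂ ++ z₂)).Perm (x₁ ++ x₂ ++ (z₁ ++ z₂)) := by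
    simpa only [List.append_assoc] using (List.perm_append_comm_assoc z₁ x₂ z₂).append_left x₁
  rw [hSuperListZ, if_pos (by omega), hSuperList_of_perm_append hperm,
    eList_of_length_lt _ (by simp only [List.length_append] at hd ⊢; omega), mul_zero]

end SuperHomogeneous

theorem List.range_isPrefix_range {k n : ℕ} (h : k ≤ n) : List.range k <+: List.range n := by
  obtain ⟨t, rfl⟩ := Nat.exists_eq_add_of_le h
  exact ⟨_, List.range_add.symm⟩

section Alphabets

variable {R : Type*} [CommRing R]

@[simp]
theorem length_AAlph (α : ℕ → R) (i : ℕ) : (AAlph α i).length = i := by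
  simp [AAlph]

@[simp]
theorem length_BAlph (β : ℕ → R) (i : ℕ) : (BAlph β i).length = i := by
  simp [BAlph]

theorem AAlph_isPrefix (α : ℕ → R) {k n : ℕ} (h : k ≤ n) : AAlph α k <+: AAlph α n :=
  (List.range_isPrefix_range h).map _

theorem BAlph_isPrefix (β : ℕ → R) {k n : ℕ} (h : k ≤ n) : BAlph β k <+: BAlph β n :=
  (List.range_isPrefix_range h).map _

end Alphabets

theorem Matrix.det_eq_zero_of_forall_le_le {n R : Type*} [Fintype n] [DecidableEq n]
    [LinearOrder n] [CommRing R] (M : Matrix n n R) (r : n)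
    (h : ∀ i j, i ≤ r → r ≤ j → M i j = 0) : M.det = 0 := by
  rw [Matrix.det_apply]
  refine Finset.sum_eq_zero fun σ _ => ?_
  obtain ⟨j, hj, hσj⟩ : ∃ j, r ≤ j ∧ σ j ≤ r := by
    by_contra! hσ
    have hcard : (Finset.univ.filter (r ≤ ·)).card ≤ (Finset.univ.filter (r < ·)).card :=
      Finset.card_le_card_of_injOn σ (fun j hj => by simp_all) σ.injective.injOn
    refine hcard.not_gt (Finset.card_lt_card ⟨fun j hj => ?_, fun hsub => ?_⟩)
    · simp_all [le_of_lt]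
    · simpa using hsub (by simp : r ∈ Finset.univ.filter (r ≤ ·))
  exact smul_eq_zero_of_right _ (Finset.prod_eq_zero (Finset.mem_univ j) (h _ _ hσj hj))

/-- Rows and columns are `0`-indexed, so row `i` here is the paper's row `i+1`
(whence `B_{i-1}` becomes `BAlph β i`). -/
theorem deformed_basis_duality {R : Type*} [CommRing R] (α β : ℕ → R)
    (l m : ℕ → ℕ) (hl : Antitone l) (hm : Antitone m)
    (L : ℕ) (hLl : ∀ n, L ≤ n → l n = 0) (hLm : ∀ n, L ≤ n → m n = 0) :
    Matrix.det (Matrix.of fun i j : Fin L =>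
        hSuperListZ (AAlph α (m j) ++ BAlph β i) (AAlph α (l i - 1) ++ BAlph β j)
          ((l i : ℤ) - m j - (i : ℕ) + (j : ℕ)))
      = if (∀ n, l n = m n) then 1 else 0 := by
  split_ifs with hlm
  · rw [Matrix.det_of_isUpperTriangular]
    · refine Finset.prod_eq_one fun i _ => ?_
      simpa [hlm i] using hSuperListZ_zero _ _
    · intro i j (hji : j < i)
      have hlij := hl hji.le
      exact hSuperListZ_of_neg _ _ (by rw [← hlm j]; omega)
  obtain ⟨r, hr⟩ := not_forall.mp hlm
  have hrL : r < L := by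
    by_contra! h
    exact hr ((hLl r h).trans (hLm r h).symm)
  rcases lt_or_gt_of_ne hr with hlt | hgt
  · rw [← Matrix.det_transpose]
    refine Matrix.det_eq_zero_of_forall_le_le _ ⟨r, hrL⟩ fun i j hi hj => ?_
    have hlj := hl (show r ≤ j from hj)
    have hmi := hm (show i ≤ r from hi)
    exact hSuperListZ_of_neg _ _ (by omega)
  · refine Matrix.det_eq_zero_of_forall_le_le _ ⟨r, hrL⟩ fun i j hi hj => ?_
    have hli := hl (show i ≤ r from hi)
    have hmj := hm (show r ≤ j from hj)
    refine hSuperListZ_append_eq_zero_of_isPrefix (AAlph_isPrefix α (by omega))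
      (BAlph_isPrefix β (hi.trans hj)) ?_
    simp only [length_AAlph, length_BAlph]
    omega
end

section
/- For \mu \not\subseteq \lambda, the skew canonical Grothendieck function satisfies G_{\lambda/\mu}(x; \alpha, \beta) = \prod_{(i,j) \in \mu/\lambda} (\alpha_i + \beta_j) \cdot G_{\lambda/(\lambda \cap \mu)}(x; \alpha, \beta), where \mu/\lambda denotes the set of cells of \mu not in \lambda. In particular, G_{(1)/(2)}(x; \alpha, \beta) = \alpha_2 + \beta_1. -/
/-- For `μ ⊄ λ`, the skew canonical Grothendieck function satisfies
`G_{λ/μ}(x; α, β) = ∏_{(i,j) ∈ μ/λ} (α_j + β_i) ⋅ G_{λ/(λ∩μ)}(x; α, β)`,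
where the product is over the cells of `μ` not in `λ` (the cell in row `i`,
column `j` contributing `α_j + β_i`); in particular
`G_{(1)/(2)}(x; α, β) = α_2 + β_1`.
Here partitions with at most `L` parts are encoded as antitone functions
`Fin L → ℕ`; `Gs L λ μ` denotes `G_{λ/μ}(x; α, β)` and `Gom L λ μ` denotes
`G_{λ⊖μ}(x; α, β)`.  The hypotheses are: the decomposition
`G_{λ/μ} = ∑_{ν ⊆ μ} (∏_{(i,j) ∈ μ/ν} (α_j + β_i)) G_{λ⊖ν}` (`hdef`), the
vanishing `G_{λ⊖μ} = 0` for `μ ⊄ λ` (`hvanish`), the normalization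
`G_{λ⊖λ} = 1` (`hnorm`), and `G_{(1)/(1)} = 1` (`hG11`, from the
Jacobi--Trudi formula).  Rows are `0`-indexed, so row `i` carries `β_{i+1}`. -/
theorem skew_G_not_contained {R : Type*} [CommRing R] (α β : ℕ → R)
    (Gs Gom : (L : ℕ) → (Fin L → ℕ) → (Fin L → ℕ) → R)
    (hdef : ∀ (L : ℕ) (lam mu : Fin L → ℕ),
      (∀ i j : Fin L, i ≤ j → lam j ≤ lam i) → (∀ i j : Fin L, i ≤ j → mu j ≤ mu i) →
      Gs L lam mu
        = ∑ ν ∈ (Fintype.piFinset fun i : Fin L => Finset.Iic (mu i)).filter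
            (fun ν => ∀ i j : Fin L, i ≤ j → ν j ≤ ν i),
          (∏ i : Fin L, ∏ j ∈ Finset.Ioc (ν i) (mu i), (α j + β ((i : ℕ) + 1))) *
            Gom L lam ν)
    (hvanish : ∀ (L : ℕ) (lam mu : Fin L → ℕ),
      ¬ (∀ i : Fin L, mu i ≤ lam i) → Gom L lam mu = 0)
    (hnorm : ∀ (L : ℕ) (lam : Fin L → ℕ), Gom L lam lam = 1)
    (hG11 : Gs 1 ![1] ![1] = 1) :
    (∀ (L : ℕ) (lam mu : Fin L → ℕ),
      (∀ i j : Fin L, i ≤ j → lam j ≤ lam i) → (∀ i j : Fin L, i ≤ j → mu j ≤ mu i) →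
      ¬ (∀ i : Fin L, mu i ≤ lam i) →
      Gs L lam mu
        = (∏ i : Fin L, ∏ j ∈ Finset.Ioc (min (lam i) (mu i)) (mu i),
            (α j + β ((i : ℕ) + 1))) * Gs L lam (fun i => min (lam i) (mu i))) ∧
    Gs 1 ![1] ![2] = α 2 + β 1 := by

  have main : ∀ (L : ℕ) (lam mu : Fin L → ℕ),
      (∀ i j : Fin L, i ≤ j → lam j ≤ lam i) → (∀ i j : Fin L, i ≤ j → mu j ≤ mu i) →
      ¬ (∀ i : Fin L, mu i ≤ lam i) →
      Gs L lam mu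
        = (∏ i : Fin L, ∏ j ∈ Finset.Ioc (min (lam i) (mu i)) (mu i),
            (α j + β ((i : ℕ) + 1))) * Gs L lam (fun i => min (lam i) (mu i)) := by
    intro L lam mu hlam hmu _
    have hmin : ∀ i j : Fin L, i ≤ j → min (lam j) (mu j) ≤ min (lam i) (mu i) :=
      fun i j h => min_le_min (hlam i j h) (hmu i j h)
    rw [hdef L lam mu hlam hmu, hdef L lam _ hlam hmin, Finset.mul_sum]
    have hsub : (Fintype.piFinset fun i : Fin L => Finset.Iic (min (lam i) (mu i))).filter
        (fun ν => ∀ i j : Fin L, i ≤ j → ν j ≤ ν i)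
        ⊆ (Fintype.piFinset fun i : Fin L => Finset.Iic (mu i)).filter
        (fun ν => ∀ i j : Fin L, i ≤ j → ν j ≤ ν i) := by
      intro ν hν
      simp only [Finset.mem_filter, Fintype.mem_piFinset, Finset.mem_Iic] at *
      exact ⟨fun i => le_trans (hν.1 i) (min_le_right _ _), hν.2⟩
    have hzero : ∀ ν ∈ (Fintype.piFinset fun i : Fin L => Finset.Iic (mu i)).filter
        (fun ν => ∀ i j : Fin L, i ≤ j → ν j ≤ ν i),
        ν ∉ (Fintype.piFinset fun i : Fin L => Finset.Iic (min (lam i) (mu i))).filter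
        (fun ν => ∀ i j : Fin L, i ≤ j → ν j ≤ ν i) →
        (∏ i : Fin L, ∏ j ∈ Finset.Ioc (ν i) (mu i), (α j + β ((i : ℕ) + 1))) *
          Gom L lam ν = 0 := by
      intro ν hA hB
      simp only [Finset.mem_filter, Fintype.mem_piFinset, Finset.mem_Iic] at hA hB
      have hnle : ¬ ∀ i, ν i ≤ lam i := by
        intro h
        exact hB ⟨fun i => le_min (h i) (hA.1 i), hA.2⟩
      rw [hvanish L lam ν hnle, mul_zero]
    rw [← Finset.sum_subset hsub hzero]
    apply Finset.sum_congr rfl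
    intro ν hν
    simp only [Finset.mem_filter, Fintype.mem_piFinset, Finset.mem_Iic] at hν
    rw [← mul_assoc]
    congr 1
    rw [← Finset.prod_mul_distrib]
    apply Finset.prod_congr rfl
    intro i _
    rw [mul_comm, Finset.prod_Ioc_consecutive _ (hν.1 i) (min_le_right _ _)]
  refine ⟨main, ?_⟩
  have hne : ¬ ∀ i : Fin 1, (![2] : Fin 1 → ℕ) i ≤ ![1] i := by
    intro h
    have := h 0
    simp at this
  have h := main 1 ![1] ![2] (fun i j _ => by fin_cases i <;> fin_cases j <;> simp)
    (fun i j _ => by fin_cases i <;> fin_cases j <;> simp) hne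
  rw [h]
  have hemin : (fun i : Fin 1 => min (![1] i) (![2] i)) = ![1] := by
    funext i; fin_cases i; simp
  rw [hemin, hG11, mul_one]
  have : ∀ i : Fin 1, min ((![1] : Fin 1 → ℕ) i) (![2] i) = 1 := by
    intro i; fin_cases i; simp
  rw [Fin.prod_univ_one, this 0]
  have hIoc : Finset.Ioc 1 2 = ({2} : Finset ℕ) := by decide
  simp [hIoc]
end
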